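/- Fix T > 0 and λ̄, B, ρ₁ ∈ ℝ, and let a, b, λ : ℝ → ℝ be functions. Let θ ∈ C²(ℝ) solve (1/2) a(y)² θ″(y) + b(y) θ′(y) = λ(y)² − λ̄², and let θ₁ ∈ C²(ℝ) solve (1/2) a(y)² θ₁″(y) + b(y) θ₁′(y) = λ(y) a(y) θ′(y) − B. Let v be a C^∞ function on [0,T] × (0,∞) with ∂_x v > 0 and ∂_x² v < 0 solving the Merton PDE with parameter λ̄; set R = −∂_x v/∂_x² v, D₁ w = R ∂_x w, D₂ w = R² ∂_x² w. Define v^{(1,0)}(t,x) = −(1/2)(T − t) ρ₁ B D₁² v, v^{(2,0)}(t,x,y) = −(1/2) θ(y) D₁ v, and F(t,x,y) = (1/2)(T − t) θ(y) ρ₁ B ( (1/2) D₂ + D₁ ) D₁² v + (1/2) ρ₁ θ₁(y) D₁² v. Then at every point of [0,T) × (0,∞) × ℝ, ( (1/2) a(y)² ∂_y² + b(y) ∂_y ) F + ( ∂_t + λ(y)² R ∂_x + (λ(y)²/2) R² ∂_x² ) v^{(1,0)} + ρ₁ a(y) λ(y) R ∂_x ∂_y v^{(2,0)} = 0. -/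

import Mathlib

open Set

/-- Partial derivative in the time variable. -/
noncomputable def partialT (v : ℝ → ℝ → ℝ) : ℝ → ℝ → ℝ := fun t x => deriv (fun s => v s x) t

/-- Partial derivative in the wealth variable. -/
noncomputable def partialX (v : ℝ → ℝ → ℝ) : ℝ → ℝ → ℝ := fun t x => deriv (fun y => v t y) x

/-- Second partial derivative in the wealth variable. -/
noncomputable def partialXX (v : ℝ → ℝ → ℝ) : ℝ → ℝ → ℝ := partialX (partialX v)

/-- The first-order operator `D₁ w = R ∂ₓ w`. -/
noncomputable def D1 (R w : ℝ → ℝ → ℝ) : ℝ → ℝ → ℝ := fun t x => R t x * partialX w t x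

open Filter Topology


lemma hasDerivAt_sliceX {v : ℝ → ℝ → ℝ} (h : ContDiff ℝ (⊤ : ℕ∞) (fun p : ℝ × ℝ => v p.1 p.2))
    (t x : ℝ) : HasDerivAt (fun w => v t w) (partialX v t x) x := by
  have : DifferentiableAt ℝ (fun w => v t w) x :=
    ((h.differentiable (by simp)) (t, x)).comp x ((differentiableAt_const t).prodMk differentiableAt_id)
  exact this.hasDerivAt

lemma hasDerivAt_sliceT {v : ℝ → ℝ → ℝ} (h : ContDiff ℝ (⊤ : ℕ∞) (fun p : ℝ × ℝ => v p.1 p.2))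
    (t x : ℝ) : HasDerivAt (fun s => v s x) (partialT v t x) t := by
  have : DifferentiableAt ℝ (fun s => v s x) t :=
    by have := ((h.differentiable (by simp)) (t, x)).comp t ((differentiableAt_id (𝕜 := ℝ) (x := t)).prodMk (differentiableAt_const x)); exact this
  exact this.hasDerivAt

lemma partialX_eq_fderiv {v : ℝ → ℝ → ℝ} (h : ContDiff ℝ (⊤ : ℕ∞) (fun p : ℝ × ℝ => v p.1 p.2))
    (t x : ℝ) : partialX v t x = fderiv ℝ (fun p : ℝ × ℝ => v p.1 p.2) (t, x) (0, 1) := by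
  have hf := ((h.differentiable (by simp)) (t, x)).hasFDerivAt
  have hc : HasDerivAt (fun w => ((t, w) : ℝ × ℝ)) (0, 1) x :=
    (hasDerivAt_const x t).prodMk (hasDerivAt_id x)
  have hd : HasDerivAt (fun w => v t w)
      (fderiv ℝ (fun p : ℝ × ℝ => v p.1 p.2) (t, x) (0, 1)) x := hf.comp_hasDerivAt x hc
  simp only [partialX]
  exact hd.deriv

lemma partialT_eq_fderiv {v : ℝ → ℝ → ℝ} (h : ContDiff ℝ (⊤ : ℕ∞) (fun p : ℝ × ℝ => v p.1 p.2))
    (t x : ℝ) : partialT v t x = fderiv ℝ (fun p : ℝ × ℝ => v p.1 p.2) (t, x) (1, 0) := by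
  have hf := ((h.differentiable (by simp)) (t, x)).hasFDerivAt
  have hc : HasDerivAt (fun s => ((s, x) : ℝ × ℝ)) (1, 0) t :=
    (hasDerivAt_id t).prodMk (hasDerivAt_const t x)
  have hd : HasDerivAt (fun s => v s x)
      (fderiv ℝ (fun p : ℝ × ℝ => v p.1 p.2) (t, x) (1, 0)) t := by have := hf.comp_hasDerivAt t hc; exact this
  simp only [partialT]
  exact hd.deriv

lemma contDiff_partialX {v : ℝ → ℝ → ℝ} (h : ContDiff ℝ (⊤ : ℕ∞) (fun p : ℝ × ℝ => v p.1 p.2)) :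
    ContDiff ℝ (⊤ : ℕ∞) (fun p : ℝ × ℝ => partialX v p.1 p.2) := by
  have he : (fun p : ℝ × ℝ => partialX v p.1 p.2)
      = fun p => fderiv ℝ (fun p : ℝ × ℝ => v p.1 p.2) p (0, 1) :=
    funext fun p => partialX_eq_fderiv h p.1 p.2
  rw [he]
  exact (h.fderiv_right (by simp)).clm_apply contDiff_const

lemma contDiff_partialT {v : ℝ → ℝ → ℝ} (h : ContDiff ℝ (⊤ : ℕ∞) (fun p : ℝ × ℝ => v p.1 p.2)) :
    ContDiff ℝ (⊤ : ℕ∞) (fun p : ℝ × ℝ => partialT v p.1 p.2) := by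
  have he : (fun p : ℝ × ℝ => partialT v p.1 p.2)
      = fun p => fderiv ℝ (fun p : ℝ × ℝ => v p.1 p.2) p (1, 0) :=
    funext fun p => partialT_eq_fderiv h p.1 p.2
  rw [he]
  exact (h.fderiv_right (by simp)).clm_apply contDiff_const

lemma clairaut {v : ℝ → ℝ → ℝ} (h : ContDiff ℝ (⊤ : ℕ∞) (fun p : ℝ × ℝ => v p.1 p.2))
    (t x : ℝ) : partialT (partialX v) t x = partialX (partialT v) t x := by
  have hf1 : ContDiff ℝ (⊤ : ℕ∞) (fderiv ℝ (fun p : ℝ × ℝ => v p.1 p.2)) := h.fderiv_right (by simp)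
  have hf2 : HasFDerivAt (fderiv ℝ (fun p : ℝ × ℝ => v p.1 p.2))
      (fderiv ℝ (fderiv ℝ (fun p : ℝ × ℝ => v p.1 p.2)) (t, x)) (t, x) :=
    ((hf1.differentiable (by simp)) (t, x)).hasFDerivAt
  have hsymm := (h.contDiffAt (x := (t, x))).isSymmSndFDerivAt (n := (⊤ : ℕ∞)) (by rw [minSmoothness_of_isRCLikeNormedField]; exact WithTop.coe_le_coe.mpr (le_top : (2 : ℕ∞) ≤ ⊤))
  have hT : partialT (partialX v) t x
      = fderiv ℝ (fderiv ℝ (fun p : ℝ × ℝ => v p.1 p.2)) (t, x) (1, 0) (0, 1) := by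
    have hc : HasDerivAt (fun s => ((s, x) : ℝ × ℝ)) (1, 0) t :=
      (hasDerivAt_id t).prodMk (hasDerivAt_const t x)
    have h3 : HasDerivAt (fun s => fderiv ℝ (fun p : ℝ × ℝ => v p.1 p.2) (s, x))
        (fderiv ℝ (fderiv ℝ (fun p : ℝ × ℝ => v p.1 p.2)) (t, x) (1, 0)) t :=
      hf2.comp_hasDerivAt t hc
    have h4 : HasDerivAt (fun s => fderiv ℝ (fun p : ℝ × ℝ => v p.1 p.2) (s, x) (0, 1))
        (fderiv ℝ (fderiv ℝ (fun p : ℝ × ℝ => v p.1 p.2)) (t, x) (1, 0) (0, 1)) t :=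
      ((ContinuousLinearMap.apply ℝ ℝ ((0 : ℝ), (1 : ℝ))).hasFDerivAt).comp_hasDerivAt t h3
    have h5 : (fun s => partialX v s x)
        = fun s => fderiv ℝ (fun p : ℝ × ℝ => v p.1 p.2) (s, x) (0, 1) :=
      funext fun s => partialX_eq_fderiv h s x
    show deriv (fun s => partialX v s x) t = _
    rw [h5]
    exact h4.deriv
  have hX : partialX (partialT v) t x
      = fderiv ℝ (fderiv ℝ (fun p : ℝ × ℝ => v p.1 p.2)) (t, x) (0, 1) (1, 0) := by
    have hc : HasDerivAt (fun w => ((t, w) : ℝ × ℝ)) (0, 1) x :=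
      (hasDerivAt_const x t).prodMk (hasDerivAt_id x)
    have h3 : HasDerivAt (fun w => fderiv ℝ (fun p : ℝ × ℝ => v p.1 p.2) (t, w))
        (fderiv ℝ (fderiv ℝ (fun p : ℝ × ℝ => v p.1 p.2)) (t, x) (0, 1)) x :=
      hf2.comp_hasDerivAt x hc
    have h4 : HasDerivAt (fun w => fderiv ℝ (fun p : ℝ × ℝ => v p.1 p.2) (t, w) (1, 0))
        (fderiv ℝ (fderiv ℝ (fun p : ℝ × ℝ => v p.1 p.2)) (t, x) (0, 1) (1, 0)) x :=
      ((ContinuousLinearMap.apply ℝ ℝ ((1 : ℝ), (0 : ℝ))).hasFDerivAt).comp_hasDerivAt x h3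
    have h5 : (fun w => partialT v t w)
        = fun w => fderiv ℝ (fun p : ℝ × ℝ => v p.1 p.2) (t, w) (1, 0) :=
      funext fun w => partialT_eq_fderiv h t w
    show deriv (fun w => partialT v t w) x = _
    rw [h5]
    exact h4.deriv
  rw [hT, hX, hsymm]

set_option maxHeartbeats 1600000 in
/-- The explicit third-order term
`F = (1/2)(T − t) θ(y) ρ₁ B ((1/2)D₂ + D₁) D₁² v + (1/2) ρ₁ θ₁(y) D₁² v`
solves the order-√ε solvability equation `L₀ F + L₂ v^{(1,0)} + L₁ v^{(2,0)} = 0`, where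
`v^{(1,0)} = −(1/2)(T − t) ρ₁ B D₁² v`, `v^{(2,0)} = −(1/2) θ(y) D₁ v`,
`L₀ = (1/2)a(y)²∂_y² + b(y)∂_y`, `L₂ = ∂ₜ + λ(y)² R ∂ₓ + (λ(y)²/2) R² ∂ₓₓ` and
`L₁ = ρ₁ a(y) λ(y) R ∂ₓ∂_y`. -/
theorem order_sqrt_eps_solvability (T lamBar B ρ₁ : ℝ) (hT : 0 < T)
    (a b lam : ℝ → ℝ)
    (θ θ₁ : ℝ → ℝ) (hθ : ContDiff ℝ 2 θ) (hθ₁ : ContDiff ℝ 2 θ₁)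
    (hPoissonθ : ∀ y : ℝ,
      1 / 2 * (a y) ^ 2 * deriv (deriv θ) y + b y * deriv θ y = (lam y) ^ 2 - lamBar ^ 2)
    (hPoissonθ₁ : ∀ y : ℝ,
      1 / 2 * (a y) ^ 2 * deriv (deriv θ₁) y + b y * deriv θ₁ y
        = lam y * a y * deriv θ y - B)
    (v : ℝ → ℝ → ℝ)
    (hsmooth : ContDiff ℝ (⊤ : ℕ∞) (fun p : ℝ × ℝ => v p.1 p.2))
    (hvx_pos : ∀ t ∈ Icc (0 : ℝ) T, ∀ x ∈ Ioi (0 : ℝ), 0 < partialX v t x)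
    (hvxx_neg : ∀ t ∈ Icc (0 : ℝ) T, ∀ x ∈ Ioi (0 : ℝ), partialXX v t x < 0)
    (hpde : ∀ t ∈ Ico (0 : ℝ) T, ∀ x ∈ Ioi (0 : ℝ),
      partialT v t x - lamBar ^ 2 / 2 * (partialX v t x) ^ 2 / partialXX v t x = 0)
    (R : ℝ → ℝ → ℝ)
    (hR : ∀ t x, R t x = -(partialX v t x) / partialXX v t x)
    (v10 : ℝ → ℝ → ℝ)
    (hv10 : ∀ t x, v10 t x = -(1 / 2) * (T - t) * ρ₁ * B * D1 R (D1 R v) t x)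
    (v20 : ℝ → ℝ → ℝ → ℝ)
    (hv20 : ∀ t x y, v20 t x y = -(1 / 2) * θ y * D1 R v t x)
    (F : ℝ → ℝ → ℝ → ℝ)
    (hF : ∀ t x y, F t x y
        = 1 / 2 * (T - t) * θ y * ρ₁ * B
            * (1 / 2 * (R t x) ^ 2 * partialXX (D1 R (D1 R v)) t x
              + R t x * partialX (D1 R (D1 R v)) t x)
          + 1 / 2 * ρ₁ * θ₁ y * D1 R (D1 R v) t x) :
    ∀ t ∈ Ico (0 : ℝ) T, ∀ x ∈ Ioi (0 : ℝ), ∀ y : ℝ,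
      1 / 2 * (a y) ^ 2 * deriv (fun y' => deriv (fun y'' => F t x y'') y') y
          + b y * deriv (fun y' => F t x y') y
          + (partialT v10 t x + (lam y) ^ 2 * R t x * partialX v10 t x
              + (lam y) ^ 2 / 2 * (R t x) ^ 2 * partialXX v10 t x)
          + ρ₁ * a y * lam y * R t x
              * deriv (fun x' => deriv (fun y' => v20 t x' y') y) x = 0 := by
  intro t ht x hx y
  have htI : t ∈ Icc (0 : ℝ) T := ⟨ht.1, le_of_lt ht.2⟩
  -- smoothness of iterated partials
  have hs1 : ContDiff ℝ (⊤ : ℕ∞) (fun p : ℝ × ℝ => partialX v p.1 p.2) := contDiff_partialX hsmooth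
  have hs2 : ContDiff ℝ (⊤ : ℕ∞) (fun p : ℝ × ℝ => partialX (partialX v) p.1 p.2) := contDiff_partialX hs1
  have hs3 : ContDiff ℝ (⊤ : ℕ∞) (fun p : ℝ × ℝ => partialX (partialX (partialX v)) p.1 p.2) :=
    contDiff_partialX hs2
  have hs4 : ContDiff ℝ (⊤ : ℕ∞)
      (fun p : ℝ × ℝ => partialX (partialX (partialX (partialX v))) p.1 p.2) :=
    contDiff_partialX hs3
  have hst : ContDiff ℝ (⊤ : ℕ∞) (fun p : ℝ × ℝ => partialT v p.1 p.2) := contDiff_partialT hsmooth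
  have hst1 : ContDiff ℝ (⊤ : ℕ∞) (fun p : ℝ × ℝ => partialX (partialT v) p.1 p.2) :=
    contDiff_partialX hst
  have hst2 : ContDiff ℝ (⊤ : ℕ∞) (fun p : ℝ × ℝ => partialX (partialX (partialT v)) p.1 p.2) :=
    contDiff_partialX hst1
  -- slice derivatives
  have H1 : ∀ s u : ℝ, HasDerivAt (fun w => partialX v s w) (partialX (partialX v) s u) u :=
    fun s u => hasDerivAt_sliceX hs1 s u
  have H2 : ∀ s u : ℝ, HasDerivAt (fun w => partialX (partialX v) s w) (partialX (partialX (partialX v)) s u) u :=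
    fun s u => hasDerivAt_sliceX hs2 s u
  have H3 : ∀ s u : ℝ, HasDerivAt (fun w => partialX (partialX (partialX v)) s w) (partialX (partialX (partialX (partialX v))) s u) u :=
    fun s u => hasDerivAt_sliceX hs3 s u
  have H4 : ∀ s u : ℝ, HasDerivAt (fun w => partialX (partialX (partialX (partialX v))) s w) (partialX (partialX (partialX (partialX (partialX v)))) s u) u :=
    fun s u => hasDerivAt_sliceX hs4 s u
  have G0 : ∀ u : ℝ, HasDerivAt (fun w => partialT v t w) (partialX (partialT v) t u) u :=
    fun u => hasDerivAt_sliceX hst t u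
  have G1 : ∀ u : ℝ, HasDerivAt (fun w => partialX (partialT v) t w) (partialX (partialX (partialT v)) t u) u :=
    fun u => hasDerivAt_sliceX hst1 t u
  have G2 : ∀ u : ℝ, HasDerivAt (fun w => partialX (partialX (partialT v)) t w) (partialX (partialX (partialX (partialT v))) t u) u :=
    fun u => hasDerivAt_sliceX hst2 t u
  have S1 : HasDerivAt (fun s => partialX v s x) (partialT (partialX v) t x) t := hasDerivAt_sliceT hs1 t x
  have S2 : HasDerivAt (fun s => partialX (partialX v) s x) (partialT (partialX (partialX v)) t x) t := hasDerivAt_sliceT hs2 t x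
  have S3 : HasDerivAt (fun s => partialX (partialX (partialX v)) s x) (partialT (partialX (partialX (partialX v))) t x) t := hasDerivAt_sliceT hs3 t x
  -- nondegeneracy
  have hneg : ∀ u ∈ Ioi (0 : ℝ), partialX (partialX v) t u < 0 := by
    intro u hu
    have := hvxx_neg t htI u hu
    simpa [partialXX] using this
  have hne : ∀ u ∈ Ioi (0 : ℝ), partialX (partialX v) t u ≠ 0 := fun u hu => ne_of_lt (hneg u hu)
  have hxne : (partialX (partialX v) t x) ≠ 0 := hne x hx
  -- D1 R v formula
  have hD : ∀ s u : ℝ, D1 R v s u = -(partialX v s u) ^ 2 / (partialX (partialX v) s u) := by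
    intro s u
    simp only [D1, hR, partialXX]
    ring
  -- derivative of x ↦ D1 R v s x
  have hQ : ∀ s u : ℝ, partialX (partialX v) s u ≠ 0 →
      HasDerivAt (fun w => D1 R v s w) ((-(2 * (partialX v s u) * (partialX (partialX v) s u) ^ 2) + (partialX v s u) ^ 2 * (partialX (partialX (partialX v)) s u)) / (partialX (partialX v) s u) ^ 2) u := by
    intro s u h2
    have heq : (fun w => D1 R v s w) = fun w => -(partialX v s w) ^ 2 / (partialX (partialX v) s w) :=
      funext fun w => hD s w
    rw [heq]
    have hnum : HasDerivAt (fun w => -(partialX v s w) ^ 2) (-(2 * (partialX v s u) * (partialX (partialX v) s u))) u := by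
      have := ((H1 s u).fun_pow 2).fun_neg
      convert this using 1 <;>
        first
          | rfl
          | (funext w; push_cast; ring1)
          | (push_cast; ring1)
          | (field_simp [h2]; ring1)
    have := hnum.div (H2 s u) h2
    convert this using 1 <;>
      first
        | rfl
        | (funext w; push_cast; ring1)
        | (push_cast; ring1)
        | (field_simp [h2]; ring1)
  have hDx : ∀ s u : ℝ, partialX (partialX v) s u ≠ 0 →
      partialX (D1 R v) s u = (-(2 * (partialX v s u) * (partialX (partialX v) s u) ^ 2) + (partialX v s u) ^ 2 * (partialX (partialX (partialX v)) s u)) / (partialX (partialX v) s u) ^ 2 := by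
    intro s u h2
    show deriv (fun w => D1 R v s w) u = _
    exact (hQ s u h2).deriv
  -- W = D1 R (D1 R v) formula
  have hWf : ∀ s u : ℝ, partialX (partialX v) s u ≠ 0 →
      D1 R (D1 R v) s u = (2 * (partialX v s u) ^ 2 * (partialX (partialX v) s u) ^ 2 - (partialX v s u) ^ 3 * (partialX (partialX (partialX v)) s u)) / (partialX (partialX v) s u) ^ 3 := by
    intro s u h2
    have h0 : D1 R (D1 R v) s u = R s u * partialX (D1 R v) s u := rfl
    rw [h0, hDx s u h2, hR]
    simp only [partialXX]
    field_simp
    ring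
  -- derivative of Φ
  have hPhi1 : ∀ u : ℝ, partialX (partialX v) t u ≠ 0 →
      HasDerivAt (fun w => (2 * (partialX v t w) ^ 2 * (partialX (partialX v) t w) ^ 2 - (partialX v t w) ^ 3 * (partialX (partialX (partialX v)) t w)) / (partialX (partialX v) t w) ^ 3) ((4 * (partialX v t u) * (partialX (partialX v) t u) ^ 4 - 5 * (partialX v t u) ^ 2 * (partialX (partialX v) t u) ^ 2 * (partialX (partialX (partialX v)) t u) + 3 * (partialX v t u) ^ 3 * (partialX (partialX (partialX v)) t u) ^ 2 - (partialX v t u) ^ 3 * (partialX (partialX v) t u) * (partialX (partialX (partialX (partialX v))) t u)) / (partialX (partialX v) t u) ^ 4) u := by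
    intro u h2
    have hnum : HasDerivAt
        (fun w => 2 * (partialX v t w) ^ 2 * (partialX (partialX v) t w) ^ 2 - (partialX v t w) ^ 3 * (partialX (partialX (partialX v)) t w))
        (4 * (partialX v t u) * (partialX (partialX v) t u) ^ 3 + (partialX v t u) ^ 2 * (partialX (partialX v) t u) * (partialX (partialX (partialX v)) t u)
          - (partialX v t u) ^ 3 * (partialX (partialX (partialX (partialX v))) t u)) u := by
      have := ((((H1 t u).fun_pow 2).const_mul (2:ℝ)).fun_mul ((H2 t u).fun_pow 2)).fun_sub
        (((H1 t u).fun_pow 3).fun_mul (H3 t u))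
      convert this using 1 <;>
        first
          | rfl
          | (funext w; push_cast; ring1)
          | (push_cast; ring1)
          | (field_simp [h2]; ring1)
    have hden : HasDerivAt (fun w => (partialX (partialX v) t w) ^ 3)
        (3 * (partialX (partialX v) t u) ^ 2 * (partialX (partialX (partialX v)) t u)) u := by
      have := (H2 t u).fun_pow 3
      convert this using 1 <;>
        first
          | rfl
          | (funext w; push_cast; ring1)
          | (push_cast; ring1)
          | (field_simp [h2]; ring1)
    have := hnum.div hden (pow_ne_zero 3 h2)
    convert this using 1 <;>
      first
        | rfl
        | (funext w; push_cast; ring1)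
        | (push_cast; ring1)
        | (field_simp [h2]; ring1)
  -- value of ∂ₓ W on Ioi 0
  have hWxv : ∀ u ∈ Ioi (0 : ℝ), partialX (D1 R (D1 R v)) t u = (4 * (partialX v t u) * (partialX (partialX v) t u) ^ 4 - 5 * (partialX v t u) ^ 2 * (partialX (partialX v) t u) ^ 2 * (partialX (partialX (partialX v)) t u) + 3 * (partialX v t u) ^ 3 * (partialX (partialX (partialX v)) t u) ^ 2 - (partialX v t u) ^ 3 * (partialX (partialX v) t u) * (partialX (partialX (partialX (partialX v))) t u)) / (partialX (partialX v) t u) ^ 4 := by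
    intro u hu
    have heq : deriv (fun w => D1 R (D1 R v) t w) u = deriv (fun w => (2 * (partialX v t w) ^ 2 * (partialX (partialX v) t w) ^ 2 - (partialX v t w) ^ 3 * (partialX (partialX (partialX v)) t w)) / (partialX (partialX v) t w) ^ 3) u := by
      apply Filter.EventuallyEq.deriv_eq
      filter_upwards [isOpen_Ioi.mem_nhds hu] with w hw using hWf t w (hne w hw)
    show deriv (fun w => D1 R (D1 R v) t w) u = _
    rw [heq]
    exact (hPhi1 u (hne u hu)).deriv
  -- derivative of Φ1
  have hPhi2 : HasDerivAt (fun w => (4 * (partialX v t w) * (partialX (partialX v) t w) ^ 4 - 5 * (partialX v t w) ^ 2 * (partialX (partialX v) t w) ^ 2 * (partialX (partialX (partialX v)) t w) + 3 * (partialX v t w) ^ 3 * (partialX (partialX (partialX v)) t w) ^ 2 - (partialX v t w) ^ 3 * (partialX (partialX v) t w) * (partialX (partialX (partialX (partialX v))) t w)) / (partialX (partialX v) t w) ^ 4) ((4 * (partialX (partialX v) t x) ^ 6 - 10 * (partialX v t x) * (partialX (partialX v) t x) ^ 4 * (partialX (partialX (partialX v)) t x) + 19 * (partialX v t x) ^ 2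 * (partialX (partialX v) t x) ^ 2 * (partialX (partialX (partialX v)) t x) ^ 2 - 8 * (partialX v t x) ^ 2 * (partialX (partialX v) t x) ^ 3 * (partialX (partialX (partialX (partialX v))) t x) - 12 * (partialX v t x) ^ 3 * (partialX (partialX (partialX v)) t x) ^ 3 + 9 * (partialX v t x) ^ 3 * (partialX (partialX v) t x) * (partialX (partialX (partialX v)) t x) * (partialX (partialX (partialX (partialX v))) t x) - (partialX v t x) ^ 3 * (partialX (partialX v) t x) ^ 2 * (partialX (partialX (partialX (partialX (partialX v)))) t x)) / (partialX (partialX v) t x) ^ 5) x := by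
    have hnum : HasDerivAt
        (fun w => 4 * (partialX v t w) * (partialX (partialX v) t w) ^ 4 - 5 * (partialX v t w) ^ 2 * (partialX (partialX v) t w) ^ 2 * (partialX (partialX (partialX v)) t w)
          + 3 * (partialX v t w) ^ 3 * (partialX (partialX (partialX v)) t w) ^ 2 - (partialX v t w) ^ 3 * (partialX (partialX v) t w) * (partialX (partialX (partialX (partialX v))) t w))
        (4 * (partialX (partialX v) t x) ^ 5 + 6 * (partialX v t x) * (partialX (partialX v) t x) ^ 3 * (partialX (partialX (partialX v)) t x) - (partialX v t x) ^ 2 * (partialX (partialX v) t x) * (partialX (partialX (partialX v)) t x) ^ 2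
          - 8 * (partialX v t x) ^ 2 * (partialX (partialX v) t x) ^ 2 * (partialX (partialX (partialX (partialX v))) t x) + 5 * (partialX v t x) ^ 3 * (partialX (partialX (partialX v)) t x) * (partialX (partialX (partialX (partialX v))) t x) - (partialX v t x) ^ 3 * (partialX (partialX v) t x) * (partialX (partialX (partialX (partialX (partialX v)))) t x)) x := by
      have := (((((H1 t x).const_mul (4:ℝ)).fun_mul ((H2 t x).fun_pow 4)).fun_sub
          (((((H1 t x).fun_pow 2).const_mul (5:ℝ)).fun_mul ((H2 t x).fun_pow 2)).fun_mul (H3 t x))).fun_add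
          ((((H1 t x).fun_pow 3).const_mul (3:ℝ)).fun_mul ((H3 t x).fun_pow 2))).fun_sub
          ((((H1 t x).fun_pow 3).fun_mul (H2 t x)).fun_mul (H4 t x))
      convert this using 1 <;>
        first
          | rfl
          | (funext w; push_cast; ring1)
          | (push_cast; ring1)
          | (field_simp [h2]; ring1)
    have hden : HasDerivAt (fun w => (partialX (partialX v) t w) ^ 4)
        (4 * (partialX (partialX v) t x) ^ 3 * (partialX (partialX (partialX v)) t x)) x := by
      have := (H2 t x).fun_pow 4
      convert this using 1 <;>
        first
          | rfl
          | (funext w; push_cast; ring1)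
          | (push_cast; ring1)
          | (field_simp [h2]; ring1)
    have h2 := hxne
    have := hnum.div hden (pow_ne_zero 4 hxne)
    convert this using 1 <;>
      first
        | rfl
        | (funext w; push_cast; ring1)
        | (push_cast; ring1)
        | (field_simp [h2]; ring1)
  -- value of ∂ₓₓ W at x
  have hWxx : partialXX (D1 R (D1 R v)) t x = (4 * (partialX (partialX v) t x) ^ 6 - 10 * (partialX v t x) * (partialX (partialX v) t x) ^ 4 * (partialX (partialX (partialX v)) t x) + 19 * (partialX v t x) ^ 2 * (partialX (partialX v) t x) ^ 2 * (partialX (partialX (partialX v)) t x) ^ 2 - 8 * (partialX v t x) ^ 2 * (partialX (partialX v) t x) ^ 3 * (partialX (partialX (partialX (partialX v))) t x) - 12 * (partialX v t x) ^ 3 * (partialX (partialX (partialX v)) t x) ^ 3 + 9 * (partialX v t x) ^ 3 * (partialX (partialX v) t x) * (partialX (partialX (partialX v)) t x) * (partialX (partialX (partialX (partialX v))) t x) - (partialX v t x) ^ 3 * (partialX (partialX v) t x) ^ 2 * (partialX (partialX (partialX (partialX (partialX v)))) t x)) / (partialX (partialX v) t x) ^ 5 := by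
    have heq : deriv (fun w => partialX (D1 R (D1 R v)) t w) x = deriv (fun w => (4 * (partialX v t w) * (partialX (partialX v) t w) ^ 4 - 5 * (partialX v t w) ^ 2 * (partialX (partialX v) t w) ^ 2 * (partialX (partialX (partialX v)) t w) + 3 * (partialX v t w) ^ 3 * (partialX (partialX (partialX v)) t w) ^ 2 - (partialX v t w) ^ 3 * (partialX (partialX v) t w) * (partialX (partialX (partialX (partialX v))) t w)) / (partialX (partialX v) t w) ^ 4) x := by
      apply Filter.EventuallyEq.deriv_eq
      filter_upwards [isOpen_Ioi.mem_nhds hx] with w hw using hWxv w hw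
    show deriv (fun w => partialX (D1 R (D1 R v)) t w) x = _
    rw [heq]
    exact hPhi2.deriv
  -- PDE: value of ∂ₜ v on the slice
  have hgT : ∀ u ∈ Ioi (0 : ℝ), partialT v t u = lamBar ^ 2 / 2 * (partialX v t u) ^ 2 / (partialX (partialX v) t u) := by
    intro u hu
    have := hpde t ht u hu
    simp only [partialXX] at this
    linarith
  -- first x-derivative of ∂ₜ v
  have hGX1 : ∀ u ∈ Ioi (0 : ℝ), partialX (partialT v) t u = (lamBar ^ 2 * (partialX v t u) * (partialX (partialX v) t u) ^ 2 - lamBar ^ 2 / 2 * (partialX v t u) ^ 2 * (partialX (partialX (partialX v)) t u)) / (partialX (partialX v) t u) ^ 2 := by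
    intro u hu
    have hder : HasDerivAt (fun w => lamBar ^ 2 / 2 * (partialX v t w) ^ 2 / (partialX (partialX v) t w)) ((lamBar ^ 2 * (partialX v t u) * (partialX (partialX v) t u) ^ 2 - lamBar ^ 2 / 2 * (partialX v t u) ^ 2 * (partialX (partialX (partialX v)) t u)) / (partialX (partialX v) t u) ^ 2) u := by
      have hnum : HasDerivAt (fun w => lamBar ^ 2 / 2 * (partialX v t w) ^ 2)
          (lamBar ^ 2 * (partialX v t u) * (partialX (partialX v) t u)) u := by
        have := ((H1 t u).fun_pow 2).const_mul (lamBar ^ 2 / 2)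
        convert this using 1 <;>
          first
            | rfl
            | (funext w; push_cast; ring1)
            | (push_cast; ring1)
            | (field_simp [h2]; ring1)
      have h2 := hne u hu
      have := hnum.div (H2 t u) (hne u hu)
      convert this using 1 <;>
        first
          | rfl
          | (funext w; push_cast; ring1)
          | (push_cast; ring1)
          | (field_simp [h2]; ring1)
    have heq : deriv (fun w => partialT v t w) u = deriv (fun w => lamBar ^ 2 / 2 * (partialX v t w) ^ 2 / (partialX (partialX v) t w)) u := by
      apply Filter.EventuallyEq.deriv_eq
      filter_upwards [isOpen_Ioi.mem_nhds hu] with w hw using hgT w hw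
    show deriv (fun w => partialT v t w) u = _
    rw [heq]
    exact hder.deriv
  -- second x-derivative of ∂ₜ v
  have hGX2 : ∀ u ∈ Ioi (0 : ℝ), partialX (partialX (partialT v)) t u = (lamBar ^ 2 * (partialX (partialX v) t u) ^ 4 - lamBar ^ 2 * (partialX v t u) * (partialX (partialX v) t u) ^ 2 * (partialX (partialX (partialX v)) t u) + lamBar ^ 2 * (partialX v t u) ^ 2 * (partialX (partialX (partialX v)) t u) ^ 2 - lamBar ^ 2 / 2 * (partialX v t u) ^ 2 * (partialX (partialX v) t u) * (partialX (partialX (partialX (partialX v))) t u)) / (partialX (partialX v) t u) ^ 3 := by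
    intro u hu
    have hder : HasDerivAt (fun w => (lamBar ^ 2 * (partialX v t w) * (partialX (partialX v) t w) ^ 2 - lamBar ^ 2 / 2 * (partialX v t w) ^ 2 * (partialX (partialX (partialX v)) t w)) / (partialX (partialX v) t w) ^ 2) ((lamBar ^ 2 * (partialX (partialX v) t u) ^ 4 - lamBar ^ 2 * (partialX v t u) * (partialX (partialX v) t u) ^ 2 * (partialX (partialX (partialX v)) t u) + lamBar ^ 2 * (partialX v t u) ^ 2 * (partialX (partialX (partialX v)) t u) ^ 2 - lamBar ^ 2 / 2 * (partialX v t u) ^ 2 * (partialX (partialX v) t u) * (partialX (partialX (partialX (partialX v))) t u)) / (partialX (partialX v) t u) ^ 3) u := by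
      have hnum : HasDerivAt
          (fun w => lamBar ^ 2 * (partialX v t w) * (partialX (partialX v) t w) ^ 2 - lamBar ^ 2 / 2 * (partialX v t w) ^ 2 * (partialX (partialX (partialX v)) t w))
          (lamBar ^ 2 * (partialX (partialX v) t u) ^ 3 + lamBar ^ 2 * (partialX v t u) * (partialX (partialX v) t u) * (partialX (partialX (partialX v)) t u)
            - lamBar ^ 2 / 2 * (partialX v t u) ^ 2 * (partialX (partialX (partialX (partialX v))) t u)) u := by
        have := (((H1 t u).const_mul (lamBar ^ 2)).fun_mul ((H2 t u).fun_pow 2)).fun_sub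
          ((((H1 t u).fun_pow 2).const_mul (lamBar ^ 2 / 2)).fun_mul (H3 t u))
        convert this using 1 <;>
          first
            | rfl
            | (funext w; push_cast; ring1)
            | (push_cast; ring1)
            | (field_simp [h2]; ring1)
      have hden : HasDerivAt (fun w => (partialX (partialX v) t w) ^ 2)
          (2 * (partialX (partialX v) t u) * (partialX (partialX (partialX v)) t u)) u := by
        have := (H2 t u).fun_pow 2
        convert this using 1 <;>
          first
            | rfl
            | (funext w; push_cast; ring1)
            | (push_cast; ring1)
            | (field_simp [h2]; ring1)
      have h2 := hne u hu
      have := hnum.div hden (pow_ne_zero 2 (hne u hu))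
      convert this using 1 <;>
        first
          | rfl
          | (funext w; push_cast; ring1)
          | (push_cast; ring1)
          | (field_simp [h2]; ring1)
    have heq : deriv (fun w => partialX (partialT v) t w) u = deriv (fun w => (lamBar ^ 2 * (partialX v t w) * (partialX (partialX v) t w) ^ 2 - lamBar ^ 2 / 2 * (partialX v t w) ^ 2 * (partialX (partialX (partialX v)) t w)) / (partialX (partialX v) t w) ^ 2) u := by
      apply Filter.EventuallyEq.deriv_eq
      filter_upwards [isOpen_Ioi.mem_nhds hu] with w hw using hGX1 w hw
    show deriv (fun w => partialX (partialT v) t w) u = _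
    rw [heq]
    exact hder.deriv
  -- third x-derivative of ∂ₜ v
  have hGX3 : partialX (partialX (partialX (partialT v))) t x = (3 * lamBar ^ 2 * (partialX v t x) * (partialX (partialX v) t x) ^ 2 * (partialX (partialX (partialX v)) t x) ^ 2 - 2 * lamBar ^ 2 * (partialX v t x) * (partialX (partialX v) t x) ^ 3 * (partialX (partialX (partialX (partialX v))) t x) - 3 * lamBar ^ 2 * (partialX v t x) ^ 2 * (partialX (partialX (partialX v)) t x) ^ 3 + 3 * lamBar ^ 2 * (partialX v t x) ^ 2 * (partialX (partialX v) t x) * (partialX (partialX (partialX v)) t x) * (partialX (partialX (partialX (partialX v))) t x) - lamBar ^ 2 / 2 * (partialX v t x) ^ 2 * (partialX (partialX v) t x) ^ 2 * (partialX (partialX (partialX (partialX (partialX v)))) t x)) / (partialX (partialX v) t x) ^ 4 := by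
    have hder : HasDerivAt (fun w => (lamBar ^ 2 * (partialX (partialX v) t w) ^ 4 - lamBar ^ 2 * (partialX v t w) * (partialX (partialX v) t w) ^ 2 * (partialX (partialX (partialX v)) t w) + lamBar ^ 2 * (partialX v t w) ^ 2 * (partialX (partialX (partialX v)) t w) ^ 2 - lamBar ^ 2 / 2 * (partialX v t w) ^ 2 * (partialX (partialX v) t w) * (partialX (partialX (partialX (partialX v))) t w)) / (partialX (partialX v) t w) ^ 3) ((3 * lamBar ^ 2 * (partialX v t x) * (partialX (partialX v) t x) ^ 2 * (partialX (partialX (partialX v)) t x) ^ 2 - 2 * lamBar ^ 2 * (partialX v t x) * (partialX (partialX v) t x) ^ 3 * (partialX (partialX (partialX (partialX v))) t x) - 3 * lamBar ^ 2 * (partialX v t x) ^ 2 * (partialX (partialX (partialX v)) t x) ^ 3 + 3 * lamBar ^ 2 * (partialX v t x) ^ 2 * (partialX (partialX v) t x) * (partialX (partialX (partialX v)) t x) * (partialX (partialX (partialX (partialX v))) t x) - lamBar ^ 2 / 2 * (partialX v t x) ^ 2 * (partialX (partialX v) t x) ^ 2 * (partialX (partialX (partialX (partialX (partialX v)))) t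 x)) / (partialX (partialX v) t x) ^ 4) x := by
      have hnum : HasDerivAt
          (fun w => lamBar ^ 2 * (partialX (partialX v) t w) ^ 4 - lamBar ^ 2 * (partialX v t w) * (partialX (partialX v) t w) ^ 2 * (partialX (partialX (partialX v)) t w)
            + lamBar ^ 2 * (partialX v t w) ^ 2 * (partialX (partialX (partialX v)) t w) ^ 2 - lamBar ^ 2 / 2 * (partialX v t w) ^ 2 * (partialX (partialX v) t w) * (partialX (partialX (partialX (partialX v))) t w))
          (3 * lamBar ^ 2 * (partialX (partialX v) t x) ^ 3 * (partialX (partialX (partialX v)) t x) - 2 * lamBar ^ 2 * (partialX v t x) * (partialX (partialX v) t x) ^ 2 * (partialX (partialX (partialX (partialX v))) t x)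
            + 3 / 2 * lamBar ^ 2 * (partialX v t x) ^ 2 * (partialX (partialX (partialX v)) t x) * (partialX (partialX (partialX (partialX v))) t x) - lamBar ^ 2 / 2 * (partialX v t x) ^ 2 * (partialX (partialX v) t x) * (partialX (partialX (partialX (partialX (partialX v)))) t x)) x := by
        have := (((((H2 t x).fun_pow 4).const_mul (lamBar ^ 2)).fun_sub
            ((((H1 t x).const_mul (lamBar ^ 2)).fun_mul ((H2 t x).fun_pow 2)).fun_mul (H3 t x))).fun_add
            ((((H1 t x).fun_pow 2).const_mul (lamBar ^ 2)).fun_mul ((H3 t x).fun_pow 2))).fun_sub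
            (((((H1 t x).fun_pow 2).const_mul (lamBar ^ 2 / 2)).fun_mul (H2 t x)).fun_mul (H4 t x))
        convert this using 1 <;>
          first
            | rfl
            | (funext w; push_cast; ring1)
            | (push_cast; ring1)
            | (field_simp [h2]; ring1)
      have hden : HasDerivAt (fun w => (partialX (partialX v) t w) ^ 3)
          (3 * (partialX (partialX v) t x) ^ 2 * (partialX (partialX (partialX v)) t x)) x := by
        have := (H2 t x).fun_pow 3
        convert this using 1 <;>
          first
            | rfl
            | (funext w; push_cast; ring1)
            | (push_cast; ring1)
            | (field_simp [h2]; ring1)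
      have h2 := hxne
      have := hnum.div hden (pow_ne_zero 3 hxne)
      convert this using 1 <;>
        first
          | rfl
          | (funext w; push_cast; ring1)
          | (push_cast; ring1)
          | (field_simp [h2]; ring1)
    have heq : deriv (fun w => partialX (partialX (partialT v)) t w) x = deriv (fun w => (lamBar ^ 2 * (partialX (partialX v) t w) ^ 4 - lamBar ^ 2 * (partialX v t w) * (partialX (partialX v) t w) ^ 2 * (partialX (partialX (partialX v)) t w) + lamBar ^ 2 * (partialX v t w) ^ 2 * (partialX (partialX (partialX v)) t w) ^ 2 - lamBar ^ 2 / 2 * (partialX v t w) ^ 2 * (partialX (partialX v) t w) * (partialX (partialX (partialX (partialX v))) t w)) / (partialX (partialX v) t w) ^ 3) x := by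
      apply Filter.EventuallyEq.deriv_eq
      filter_upwards [isOpen_Ioi.mem_nhds hx] with w hw using hGX2 w hw
    show deriv (fun w => partialX (partialX (partialT v)) t w) x = _
    rw [heq]
    exact hder.deriv
  -- Clairaut chain
  have hfun1 : partialT (partialX v) = partialX (partialT v) :=
    funext fun s => funext fun u => clairaut hsmooth s u
  have hc1 : partialT (partialX v) t x = partialX (partialT v) t x := by rw [hfun1]
  have hfun2 : partialT (partialX (partialX v)) = partialX (partialX (partialT v)) :=
    funext fun s => funext fun u => by rw [clairaut hs1 s u, hfun1]
  have hc2 : partialT (partialX (partialX v)) t x = partialX (partialX (partialT v)) t x := by rw [hfun2]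
  have hc3 : partialT (partialX (partialX (partialX v))) t x = partialX (partialX (partialX (partialT v))) t x := by rw [clairaut hs2 t x, hfun2]
  -- time derivative of W
  have hv2x : ∀ᶠ s in nhds t, partialX (partialX v) s x ≠ 0 := by
    have hcont : ContinuousAt (fun s => partialX (partialX v) s x) t := by
      have h1 : Continuous (fun s : ℝ => ((s, x) : ℝ × ℝ)) := continuous_id.prodMk continuous_const
      exact ((hs2.continuous).comp h1).continuousAt
    exact hcont.eventually_ne hxne
  have hWseq : (fun s => D1 R (D1 R v) s x) =ᶠ[nhds t] (fun s => (2 * (partialX v s x) ^ 2 * (partialX (partialX v) s x) ^ 2 - (partialX v s x) ^ 3 * (partialX (partialX (partialX v)) s x)) / (partialX (partialX v) s x) ^ 3) := by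
    filter_upwards [hv2x] with s hs using hWf s x hs
  have hWtd : HasDerivAt (fun s => (2 * (partialX v s x) ^ 2 * (partialX (partialX v) s x) ^ 2 - (partialX v s x) ^ 3 * (partialX (partialX (partialX v)) s x)) / (partialX (partialX v) s x) ^ 3) (((4 * (partialX v t x) * (partialX (partialX v) t x) ^ 2 - 3 * (partialX v t x) ^ 2 * (partialX (partialX (partialX v)) t x)) * (partialX (partialX v) t x) * partialT (partialX v) t x + (-(2 * (partialX v t x) ^ 2 * (partialX (partialX v) t x) ^ 2) + 3 * (partialX v t x) ^ 3 * (partialX (partialX (partialX v)) t x)) * partialT (partialX (partialX v)) t x - (partialX v t x) ^ 3 * (partialX (partialX v) t x) * partialT (partialX (partialX (partialX v))) t x) / (partialX (partialX v) t x) ^ 4) t := by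
    have hnum : HasDerivAt
        (fun s => 2 * (partialX v s x) ^ 2 * (partialX (partialX v) s x) ^ 2 - (partialX v s x) ^ 3 * (partialX (partialX (partialX v)) s x))
        ((4 * (partialX v t x) * (partialX (partialX v) t x) ^ 2 - 3 * (partialX v t x) ^ 2 * (partialX (partialX (partialX v)) t x)) * partialT (partialX v) t x + 4 * (partialX v t x) ^ 2 * (partialX (partialX v) t x) * partialT (partialX (partialX v)) t x
          - (partialX v t x) ^ 3 * partialT (partialX (partialX (partialX v))) t x) t := by
      have := (((S1.fun_pow 2).const_mul (2:ℝ)).fun_mul (S2.fun_pow 2)).fun_sub ((S1.fun_pow 3).fun_mul S3)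
      convert this using 1 <;>
        first
          | rfl
          | (funext w; push_cast; ring1)
          | (push_cast; ring1)
          | (field_simp [h2]; ring1)
    have hden : HasDerivAt (fun s => (partialX (partialX v) s x) ^ 3) (3 * (partialX (partialX v) t x) ^ 2 * partialT (partialX (partialX v)) t x) t := by
      have := S2.fun_pow 3
      convert this using 1 <;>
        first
          | rfl
          | (funext w; push_cast; ring1)
          | (push_cast; ring1)
          | (field_simp [h2]; ring1)
    have h2 := hxne
    have := hnum.div hden (pow_ne_zero 3 hxne)
    convert this using 1 <;>
      first
        | rfl
        | (funext w; push_cast; ring1)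
        | (push_cast; ring1)
        | (field_simp [h2]; ring1)
  have hWtH : HasDerivAt (fun s => D1 R (D1 R v) s x) (((4 * (partialX v t x) * (partialX (partialX v) t x) ^ 2 - 3 * (partialX v t x) ^ 2 * (partialX (partialX (partialX v)) t x)) * (partialX (partialX v) t x) * partialT (partialX v) t x + (-(2 * (partialX v t x) ^ 2 * (partialX (partialX v) t x) ^ 2) + 3 * (partialX v t x) ^ 3 * (partialX (partialX (partialX v)) t x)) * partialT (partialX (partialX v)) t x - (partialX v t x) ^ 3 * (partialX (partialX v) t x) * partialT (partialX (partialX (partialX v))) t x) / (partialX (partialX v) t x) ^ 4) t :=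
    hWtd.congr_of_eventuallyEq hWseq
  have hWt : deriv (fun s => D1 R (D1 R v) s x) t = ((4 * (partialX v t x) * (partialX (partialX v) t x) ^ 2 - 3 * (partialX v t x) ^ 2 * (partialX (partialX (partialX v)) t x)) * (partialX (partialX v) t x) * partialT (partialX v) t x + (-(2 * (partialX v t x) ^ 2 * (partialX (partialX v) t x) ^ 2) + 3 * (partialX v t x) ^ 3 * (partialX (partialX (partialX v)) t x)) * partialT (partialX (partialX v)) t x - (partialX v t x) ^ 3 * (partialX (partialX v) t x) * partialT (partialX (partialX (partialX v))) t x) / (partialX (partialX v) t x) ^ 4 := hWtH.deriv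
  -- R at the point
  have hRx : R t x = -((partialX v t x)) / ((partialX (partialX v) t x)) := by
    rw [hR]
    simp only [partialXX]
  -- THE KEY IDENTITY
  have hKEY : deriv (fun s => D1 R (D1 R v) s x) t
      + lamBar ^ 2 * (R t x * partialX (D1 R (D1 R v)) t x)
      + lamBar ^ 2 / 2 * ((R t x) ^ 2 * partialXX (D1 R (D1 R v)) t x) = 0 := by
    rw [hWt, hWxv x hx, hWxx, hRx, hc1, hGX1 x hx, hc2, hGX2 x hx, hc3, hGX3]
    field_simp
    ring
  -- assembling: derivatives of v10
  have hWxH : HasDerivAt (fun w => D1 R (D1 R v) t w) (partialX (D1 R (D1 R v)) t x) x := by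
    rw [hWxv x hx]
    refine (hPhi1 x hxne).congr_of_eventuallyEq ?_
    filter_upwards [isOpen_Ioi.mem_nhds hx] with w hw using hWf t w (hne w hw)
  have hP1 : partialT v10 t x = 1 / 2 * ρ₁ * B * (D1 R (D1 R v) t x)
      - 1 / 2 * (T - t) * ρ₁ * B * deriv (fun s => D1 R (D1 R v) s x) t := by
    have he : (fun s => v10 s x) = fun s => -(1 / 2) * (T - s) * ρ₁ * B * (D1 R (D1 R v) s x) :=
      funext fun s => hv10 s x
    have hlin : HasDerivAt (fun s : ℝ => -(1 / 2) * (T - s) * ρ₁ * B) (1 / 2 * ρ₁ * B) t := by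
      have := ((((hasDerivAt_id t).const_sub T).const_mul (-(1 / 2 : ℝ))).mul_const ρ₁).mul_const B
      convert this using 1 <;> first | rfl | ring1
    have hd := hlin.fun_mul hWtH
    show deriv (fun s => v10 s x) t = _
    rw [he, hWt]
    rw [hd.deriv]
    ring
  have hP2 : partialX v10 t x = -(1 / 2) * (T - t) * ρ₁ * B * partialX (D1 R (D1 R v)) t x := by
    have he : (fun w => v10 t w) = fun w => -(1 / 2) * (T - t) * ρ₁ * B * (D1 R (D1 R v) t w) :=
      funext fun w => hv10 t w
    show deriv (fun w => v10 t w) x = _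
    rw [he]
    have hd := (hWxH.const_mul (-(1 / 2) * (T - t) * ρ₁ * B)).deriv
    rw [← hd]
  have hP3 : partialXX v10 t x = -(1 / 2) * (T - t) * ρ₁ * B * partialXX (D1 R (D1 R v)) t x := by
    have hpre : ∀ u ∈ Ioi (0 : ℝ), partialX v10 t u
        = -(1 / 2) * (T - t) * ρ₁ * B * ((4 * (partialX v t u) * (partialX (partialX v) t u) ^ 4 - 5 * (partialX v t u) ^ 2 * (partialX (partialX v) t u) ^ 2 * (partialX (partialX (partialX v)) t u) + 3 * (partialX v t u) ^ 3 * (partialX (partialX (partialX v)) t u) ^ 2 - (partialX v t u) ^ 3 * (partialX (partialX v) t u) * (partialX (partialX (partialX (partialX v))) t u)) / (partialX (partialX v) t u) ^ 4) := by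
      intro u hu
      have he : (fun w => v10 t w) = fun w => -(1 / 2) * (T - t) * ρ₁ * B * (D1 R (D1 R v) t w) :=
        funext fun w => hv10 t w
      have hWxHu : HasDerivAt (fun w => D1 R (D1 R v) t w) ((4 * (partialX v t u) * (partialX (partialX v) t u) ^ 4 - 5 * (partialX v t u) ^ 2 * (partialX (partialX v) t u) ^ 2 * (partialX (partialX (partialX v)) t u) + 3 * (partialX v t u) ^ 3 * (partialX (partialX (partialX v)) t u) ^ 2 - (partialX v t u) ^ 3 * (partialX (partialX v) t u) * (partialX (partialX (partialX (partialX v))) t u)) / (partialX (partialX v) t u) ^ 4) u := by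
        refine (hPhi1 u (hne u hu)).congr_of_eventuallyEq ?_
        filter_upwards [isOpen_Ioi.mem_nhds hu] with w hw using hWf t w (hne w hw)
      show deriv (fun w => v10 t w) u = _
      rw [he]
      have hd := (hWxHu.const_mul (-(1 / 2) * (T - t) * ρ₁ * B)).deriv
      rw [← hd]
    have heq : deriv (fun w => partialX v10 t w) x
        = deriv (fun w => -(1 / 2) * (T - t) * ρ₁ * B * ((4 * (partialX v t w) * (partialX (partialX v) t w) ^ 4 - 5 * (partialX v t w) ^ 2 * (partialX (partialX v) t w) ^ 2 * (partialX (partialX (partialX v)) t w) + 3 * (partialX v t w) ^ 3 * (partialX (partialX (partialX v)) t w) ^ 2 - (partialX v t w) ^ 3 * (partialX (partialX v) t w) * (partialX (partialX (partialX (partialX v))) t w)) / (partialX (partialX v) t w) ^ 4)) x := by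
      apply Filter.EventuallyEq.deriv_eq
      filter_upwards [isOpen_Ioi.mem_nhds hx] with w hw using hpre w hw
    show deriv (fun w => partialX v10 t w) x = _
    rw [heq, (hPhi2.const_mul (-(1 / 2) * (T - t) * ρ₁ * B)).deriv, hWxx]
  -- the L₁ term
  have hθdiff : Differentiable ℝ θ := hθ.differentiable two_ne_zero
  have hθ₁diff : Differentiable ℝ θ₁ := hθ₁.differentiable two_ne_zero
  have hv20in : ∀ x' : ℝ, deriv (fun y' => v20 t x' y') y = -(1 / 2) * deriv θ y * (D1 R v t x') := by
    intro x'
    have he : (fun y' => v20 t x' y') = fun y' => -(1 / 2) * θ y' * (D1 R v t x') :=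
      funext fun y' => hv20 t x' y'
    rw [he]
    exact (((hθdiff y).hasDerivAt.const_mul (-(1 / 2 : ℝ))).mul_const (D1 R v t x')).deriv
  have hP4 : deriv (fun x' => deriv (fun y' => v20 t x' y') y) x
      = -(1 / 2) * deriv θ y * partialX (D1 R v) t x := by
    have he : (fun x' => deriv (fun y' => v20 t x' y') y)
        = fun x' => -(1 / 2) * deriv θ y * (D1 R v t x') := funext hv20in
    rw [he]
    have hQx : HasDerivAt (fun w => D1 R v t w) (partialX (D1 R v) t x) x := by
      rw [hDx t x hxne]
      exact hQ t x hxne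
    exact (hQx.const_mul (-(1 / 2) * deriv θ y)).deriv
  -- y-derivatives of F
  have hθd' : Differentiable ℝ (deriv θ) := by
    have h2 : ContDiff ℝ (1 + 1 : ℕ) θ := by exact_mod_cast hθ
    exact ((contDiff_succ_iff_deriv.mp (by exact_mod_cast h2)).2.2).differentiable one_ne_zero
  have hθ₁d' : Differentiable ℝ (deriv θ₁) := by
    have h2 : ContDiff ℝ (1 + 1 : ℕ) θ₁ := by exact_mod_cast hθ₁
    exact ((contDiff_succ_iff_deriv.mp (by exact_mod_cast h2)).2.2).differentiable one_ne_zero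
  have heF : (fun y'' => F t x y'')
      = fun y'' => (1 / 2 * (T - t) * ρ₁ * B
          * (1 / 2 * (R t x) ^ 2 * partialXX (D1 R (D1 R v)) t x + R t x * partialX (D1 R (D1 R v)) t x)) * θ y''
        + (1 / 2 * ρ₁ * (D1 R (D1 R v) t x)) * θ₁ y'' := by
    funext y''
    rw [hF]
    ring
  have hFy1 : ∀ y' : ℝ, deriv (fun y'' => F t x y'') y'
      = (1 / 2 * (T - t) * ρ₁ * B
          * (1 / 2 * (R t x) ^ 2 * partialXX (D1 R (D1 R v)) t x + R t x * partialX (D1 R (D1 R v)) t x)) * deriv θ y'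
        + (1 / 2 * ρ₁ * (D1 R (D1 R v) t x)) * deriv θ₁ y' := by
    intro y'
    rw [heF]
    exact (((hθdiff y').hasDerivAt.const_mul _).add ((hθ₁diff y').hasDerivAt.const_mul _)).deriv
  have hP5a : deriv (fun y' => F t x y') y
      = (1 / 2 * (T - t) * ρ₁ * B
          * (1 / 2 * (R t x) ^ 2 * partialXX (D1 R (D1 R v)) t x + R t x * partialX (D1 R (D1 R v)) t x)) * deriv θ y
        + (1 / 2 * ρ₁ * (D1 R (D1 R v) t x)) * deriv θ₁ y := hFy1 y
  have hP5b : deriv (fun y' => deriv (fun y'' => F t x y'') y') y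
      = (1 / 2 * (T - t) * ρ₁ * B
          * (1 / 2 * (R t x) ^ 2 * partialXX (D1 R (D1 R v)) t x + R t x * partialX (D1 R (D1 R v)) t x)) * deriv (deriv θ) y
        + (1 / 2 * ρ₁ * (D1 R (D1 R v) t x)) * deriv (deriv θ₁) y := by
    have he2 : (fun y' => deriv (fun y'' => F t x y'') y')
        = fun y' => (1 / 2 * (T - t) * ρ₁ * B
            * (1 / 2 * (R t x) ^ 2 * partialXX (D1 R (D1 R v)) t x + R t x * partialX (D1 R (D1 R v)) t x)) * deriv θ y'
          + (1 / 2 * ρ₁ * (D1 R (D1 R v) t x)) * deriv θ₁ y' := funext hFy1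
    rw [he2]
    exact (((hθd' y).hasDerivAt.const_mul _).add ((hθ₁d' y).hasDerivAt.const_mul _)).deriv
  -- the point relation W = R ⬝ ∂ₓ(D1 R v)
  have hWp : D1 R (D1 R v) t x = R t x * partialX (D1 R v) t x := rfl
  -- conclude
  rw [hP5b, hP5a, hP1, hP2, hP3, hP4, hWp]
  linear_combination (1 / 2 * (T - t) * ρ₁ * B
      * (1 / 2 * (R t x) ^ 2 * partialXX (D1 R (D1 R v)) t x + R t x * partialX (D1 R (D1 R v)) t x)) * hPoissonθ y
    + (1 / 2 * ρ₁ * (R t x * partialX (D1 R v) t x)) * hPoissonθ₁ y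
    + (-(1 / 2) * (T - t) * ρ₁ * B) * hKEY
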